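/- arXiv:1801.06882 — 2 statements merged into one kernel-verified Lean document; each statement's English description precedes it below -/
import Mathlib

section
/- Let C be a circuit of a k-laminar matroid M with |C| ≥ 2k−1. If e ∈ E(M) − cl(C) and r(cl(C ∪ {e}) − cl(C)) ≥ 2, then cl(C ∪ {e}) is a Hamiltonian flat of M. -/
open Set

namespace Matroid

variable {α : Type*}

/-- A circuit is a minimal dependent set. -/
def Circuit (M : Matroid α) (C : Set α) : Prop := Minimal M.Dep C

/-- The rank of a set: the supremum of sizes of independent subsets. -/
noncomputable def rk (M : Matroid α) (X : Set α) : ℕ :=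
  sSup {n | ∃ I, I ⊆ X ∧ M.Indep I ∧ I.ncard = n}

/-- A Hamiltonian flat is a flat with a spanning circuit. -/
def HamFlat (M : Matroid α) (F : Set α) : Prop :=
  M.IsFlat F ∧ ∃ C, M.Circuit C ∧ C ⊆ F ∧ M.closure C = F

/-- `M` is `k`-closure-laminar if the Hamiltonian flats containing any given
`k`-element independent set form a chain under inclusion. -/
def KClosureLaminar (M : Matroid α) (k : ℕ) : Prop :=
  ∀ X ⊆ M.E, M.Indep X → X.ncard = k →
    IsChain (· ⊆ ·) {F | M.HamFlat F ∧ X ⊆ F}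

/-- `M` is `k`-laminar if whenever two circuits meet in at least `k` elements,
one is contained in the closure of the other. -/
def KLaminar (M : Matroid α) (k : ℕ) : Prop :=
  ∀ C₁ C₂, M.Circuit C₁ → M.Circuit C₂ → k ≤ (C₁ ∩ C₂).ncard →
    C₁ ⊆ M.closure C₂ ∨ C₂ ⊆ M.closure C₁

/-- Deletion of a set of elements. -/
def deleteSet (M : Matroid α) (D : Set α) : Matroid α := M.restrict (M.E \ D)

/-- Contraction of a set of elements, defined via duality. -/
def contractSet (M : Matroid α) (C : Set α) : Matroid α := (M✶.deleteSet C)✶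

end Matroid

section Aux

open Matroid

variable {α : Type*} {M : Matroid α} {C D : Set α} {x : α}

private lemma flat_closure'' (M : Matroid α) (X : Set α) : M.IsFlat (M.closure X) := by
  exact isFlat_closure X

private lemma circ_diff_indep (hC : Minimal M.Dep C) (hx : x ∈ C) : M.Indep (C \ {x}) := by
  by_contra h
  have hdep : M.Dep (C \ {x}) :=
    dep_of_not_indep h (diff_subset.trans hC.1.subset_ground)
  exact (hC.2 hdep diff_subset hx).2 rfl

private lemma circ_mem_closure_diff (hC : Minimal M.Dep C) (hx : x ∈ C) :
    x ∈ M.closure (C \ {x}) := by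
  have hI := circ_diff_indep hC hx
  have hdep : M.Dep (insert x (C \ {x})) := by
    rw [insert_diff_singleton, insert_eq_of_mem hx]
    exact hC.1
  exact (hI.insert_dep_iff.1 hdep).1

private lemma exists_circuit_subset' (hD : M.Dep D) (hfin : D.Finite) :
    ∃ C₀, Minimal M.Dep C₀ ∧ C₀ ⊆ D := by
  obtain ⟨C₀, hC₀, hmin⟩ := Set.Finite.exists_minimal (s := {X | X ⊆ D ∧ M.Dep X})
      (hfin.finite_subsets.subset fun X hX => hX.1) ⟨D, Subset.rfl, hD⟩
  exact ⟨C₀, ⟨hC₀.2, fun Y hY hYC => hmin ⟨hYC.trans hC₀.1, hY⟩ hYC⟩, hC₀.1⟩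

end Aux

/-- if `C` is a circuit of a `k`-laminar matroid with `|C| ≥ 2k - 1`,
`e ∈ E(M) - cl C`, and `r(cl(C ∪ {e}) - cl C) ≥ 2`, then `cl (C ∪ {e})` is a
Hamiltonian flat of `M`. -/
theorem hamFlat_closure_insert {α : Type*} (M : Matroid α) [M.Finite] (k : ℕ)
    (hM : M.KLaminar k) {C : Set α} (hC : M.Circuit C) (hcard : 2 * k ≤ C.ncard + 1)
    {e : α} (he : e ∈ M.E \ M.closure C)
    (hr : 2 ≤ M.rk (M.closure (C ∪ {e}) \ M.closure C)) :
    M.HamFlat (M.closure (C ∪ {e})) := by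
  classical
  have hC' : Minimal M.Dep C := hC
  obtain ⟨heE, hecl⟩ := he
  rw [union_singleton] at hr ⊢
  set F := M.closure (insert e C) with hFdef
  have hCE : C ⊆ M.E := hC'.1.subset_ground
  have hCclC : C ⊆ M.closure C := M.subset_closure C
  have hCF : C ⊆ F := (subset_insert e C).trans (M.subset_closure _ (insert_subset heE hCE))
  have hFE : F ⊆ M.E := M.closure_subset_ground _
  have hFflat : M.closure F = F := M.closure_closure _
  -- extract two independent elements f, g of F \ cl C
  have hrk : 2 ≤ sSup {n | ∃ I, I ⊆ F \ M.closure C ∧ M.Indep I ∧ I.ncard = n} := hr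
  have hbdd : BddAbove {n | ∃ I, I ⊆ F \ M.closure C ∧ M.Indep I ∧ I.ncard = n} :=
    ⟨M.E.ncard, fun n ⟨I, _, hIind, hIcard⟩ =>
      hIcard ▸ Set.ncard_le_ncard hIind.subset_ground M.ground_finite⟩
  have hne : {n | ∃ I, I ⊆ F \ M.closure C ∧ M.Indep I ∧ I.ncard = n}.Nonempty :=
    ⟨0, ∅, empty_subset _, M.empty_indep, Set.ncard_empty α⟩
  obtain ⟨I, hIsub, hIind, hIcard⟩ := Nat.sSup_mem hne hbdd
  have hIfin : I.Finite := M.set_finite I hIind.subset_ground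
  obtain ⟨f, g, hfI, hgI, hfg⟩ := (Set.one_lt_ncard_iff hIfin).1 (by omega)
  have hfF : f ∈ F \ M.closure C := hIsub hfI
  have hgF : g ∈ F \ M.closure C := hIsub hgI
  have hpair : M.Indep {f, g} := hIind.subset (by
    intro y hy; rcases hy with rfl | rfl; exacts [hfI, hgI])
  -- Step 1 : for any x ∈ F \ cl C, cl (insert x C) = F
  have hclinsert : ∀ x ∈ F \ M.closure C, M.closure (insert x C) = F := by
    intro x hx
    have hex : e ∈ M.closure (insert x C) \ M.closure C := Matroid.closure_exchange hx
    apply subset_antisymm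
    · exact M.closure_subset_closure_of_subset_closure (insert_subset hx.1 hCF)
    · exact M.closure_subset_closure_of_subset_closure
        (insert_subset hex.1 (hCclC.trans (M.closure_subset_closure (subset_insert x C))))
  -- Step 2 : for any x ∈ C, construct a circuit D ⊆ insert g (insert f (C \ {x}))
  have hconstruct : ∀ x ∈ C, ∃ D, Minimal M.Dep D ∧ D ⊆ insert g (insert f (C \ {x})) ∧
      f ∈ D ∧ g ∈ D ∧ (D ∩ C).Nonempty ∧ x ∉ D := by
    intro x hx
    have hB : M.Indep (C \ {x}) := circ_diff_indep hC' hx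
    have hxcl : x ∈ M.closure (C \ {x}) := circ_mem_closure_diff hC' hx
    have hclB : M.closure (C \ {x}) = M.closure C := by
      rw [← Matroid.closure_insert_eq_of_mem_closure hxcl, insert_diff_singleton, insert_eq_of_mem hx]
    have hfB : f ∉ C \ {x} := fun h => hfF.2 (hCclC h.1)
    have hJ : M.Indep (insert f (C \ {x})) := by
      rw [hB.insert_indep_iff_of_notMem hfB, hclB]
      exact ⟨hFE hfF.1, hfF.2⟩
    have hCsubcl : C ⊆ M.closure (insert f (C \ {x})) := by
      intro y hy
      by_cases hyx : y = x
      · subst hyx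
        exact M.closure_subset_closure (subset_insert _ _) hxcl
      · exact M.subset_closure _ hJ.subset_ground (mem_insert_of_mem _ ⟨hy, hyx⟩)
    have hclJ : M.closure (insert f (C \ {x})) = F := by
      apply subset_antisymm
      · exact M.closure_subset_closure_of_subset_closure
          (insert_subset hfF.1 (diff_subset.trans hCF))
      · rw [← hclinsert f hfF]
        exact M.closure_subset_closure_of_subset_closure
          (insert_subset (M.subset_closure _ hJ.subset_ground (mem_insert f _)) hCsubcl)
    have hgJ : g ∉ insert f (C \ {x}) := by
      rintro (rfl | h)
      · exact hfg rfl
      · exact hgF.2 (hCclC h.1)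
    have hgcl : g ∈ M.closure (insert f (C \ {x})) := hclJ ▸ hgF.1
    have hdep : M.Dep (insert g (insert f (C \ {x}))) := hJ.insert_dep_iff.2 ⟨hgcl, hgJ⟩
    obtain ⟨D, hD, hDsub⟩ := exists_circuit_subset' hdep (M.set_finite _ hdep.subset_ground)
    have hgD : g ∈ D := by
      by_contra hgD
      refine hD.1.not_indep (hJ.subset fun y hy => ?_)
      rcases hDsub hy with rfl | h
      · exact absurd hy hgD
      · exact h
    have hfD : f ∈ D := by
      by_contra hfD
      have hsub : D \ {g} ⊆ C \ {x} := by
        rintro y ⟨hyD, hyg : y ≠ g⟩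
        rcases hDsub hyD with rfl | h
        · exact absurd rfl hyg
        · rcases h with rfl | h
          · exact absurd hyD hfD
          · exact h
      exact hgF.2 (hclB ▸ (M.closure_subset_closure hsub) (circ_mem_closure_diff hD hgD))
    have hxf : x ≠ f := fun h => hfF.2 (h ▸ hCclC hx)
    have hxg : x ≠ g := fun h => hgF.2 (h ▸ hCclC hx)
    refine ⟨D, hD, hDsub, hfD, hgD, ?_, ?_⟩
    · by_contra h
      rw [Set.not_nonempty_iff_eq_empty] at h
      refine hD.1.not_indep (hpair.subset fun y hy => ?_)
      rcases hDsub hy with rfl | h'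
      · exact Or.inr rfl
      · rcases h' with rfl | h'
        · exact Or.inl rfl
        · exact absurd (Set.mem_inter hy h'.1) (by rw [h]; exact id)
    · intro hxD
      rcases hDsub hxD with h | h
      · exact hxg h
      · rcases h with h | h
        · exact hxf h
        · exact h.2 rfl
  -- the "finish" step using laminarity
  have hfinish : ∀ D, Minimal M.Dep D → D ⊆ F → f ∈ D → k ≤ (D ∩ C).ncard →
      M.HamFlat F := by
    intro D hD hDF hfD hk
    rcases hM D C hD hC hk with hDC | hCD
    · exact absurd (hDC hfD) hfF.2
    · have hclD : M.closure D = F := by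
        apply subset_antisymm
        · exact (M.closure_subset_closure hDF).trans_eq hFflat
        · rw [← hclinsert f hfF]
          exact M.closure_subset_closure_of_subset_closure
            (insert_subset (M.subset_closure D hD.1.subset_ground hfD) hCD)
      exact ⟨flat_closure'' M _, D, hD, hDF, hclD⟩
  -- main argument
  obtain ⟨x₀, hx₀⟩ := hC'.1.nonempty
  obtain ⟨D, hD, hDsub, hfD, hgD, hDC, hxD⟩ := hconstruct x₀ hx₀
  have hsubF : ∀ x : α, insert g (insert f (C \ {x})) ⊆ F :=
    fun x => insert_subset hgF.1 (insert_subset hfF.1 (diff_subset.trans hCF))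
  have hDF : D ⊆ F := hDsub.trans (hsubF x₀)
  by_cases hk1 : k ≤ (D ∩ C).ncard
  · exact hfinish D hD hDF hfD hk1
  obtain ⟨x', hx'⟩ := hDC
  obtain ⟨D', hD', hD'sub, hfD', hgD', hD'C, hxD'⟩ := hconstruct x' hx'.2
  have hD'F : D' ⊆ F := hD'sub.trans (hsubF x')
  by_cases hk2 : k ≤ (D' ∩ C).ncard
  · exact hfinish D' hD' hD'F hfD' hk2
  exfalso
  push_neg at hk1 hk2
  set Z := (D ∪ D') \ {f} with hZdef
  have hx'f : x' ≠ f := fun h => hfF.2 (h ▸ hCclC hx'.2)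
  have hx'Z : x' ∈ Z := ⟨Or.inl hx'.1, hx'f⟩
  have hZE : Z ⊆ M.E := diff_subset.trans (union_subset (hDF.trans hFE) (hD'F.trans hFE))
  have hZdep : M.Dep Z := by
    rw [← Matroid.not_indep_iff hZE]
    intro hZ
    have h1 : f ∈ M.closure (Z \ {x'}) := by
      have hsub : D' \ {f} ⊆ Z \ {x'} := by
        rintro y ⟨h, hf⟩
        exact ⟨⟨Or.inr h, hf⟩, fun hx => hxD' ((mem_singleton_iff.1 hx) ▸ h)⟩
      exact M.closure_subset_closure hsub (circ_mem_closure_diff hD' hfD')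
    have h2 : x' ∈ M.closure (Z \ {x'}) := by
      have hsub : D \ {x'} ⊆ insert f (Z \ {x'}) := by
        rintro y ⟨hyD, hyx⟩
        by_cases hyf : y = f
        · exact hyf ▸ mem_insert _ _
        · exact mem_insert_of_mem _ ⟨⟨Or.inl hyD, hyf⟩, hyx⟩
      have := M.closure_subset_closure hsub (circ_mem_closure_diff hD hx'.1)
      rwa [Matroid.closure_insert_eq_of_mem_closure h1] at this
    have hZx'indep : M.Indep (Z \ {x'}) := hZ.subset diff_subset
    have hdep : M.Dep (insert x' (Z \ {x'})) :=
      hZx'indep.insert_dep_iff.2 ⟨h2, fun h => h.2 rfl⟩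
    rw [insert_diff_singleton, insert_eq_of_mem hx'Z] at hdep
    exact hdep.not_indep hZ
  obtain ⟨E₀, hE₀, hE₀sub⟩ := exists_circuit_subset' hZdep (M.set_finite _ hZE)
  have hE₀Cg : E₀ ⊆ insert g C := by
    intro y hy
    obtain ⟨hyDD, hyf⟩ := hE₀sub hy
    have hyf' : y ≠ f := hyf
    rcases hyDD with h | h
    · rcases hDsub h with rfl | h'
      · exact mem_insert _ _
      · rcases h' with rfl | h'
        · exact absurd rfl hyf'
        · exact mem_insert_of_mem _ h'.1
    · rcases hD'sub h with rfl | h'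
      · exact mem_insert _ _
      · rcases h' with rfl | h'
        · exact absurd rfl hyf'
        · exact mem_insert_of_mem _ h'.1
  have hgE₀ : g ∉ E₀ := by
    intro hg
    have hsub : E₀ \ {g} ⊆ C := by
      rintro y ⟨hy, hyg : y ≠ g⟩
      rcases hE₀Cg hy with rfl | h
      · exact absurd rfl hyg
      · exact h
    exact hgF.2 ((M.closure_subset_closure hsub) (circ_mem_closure_diff hE₀ hg))
  have hE₀C : E₀ ⊆ C := by
    intro y hy
    rcases hE₀Cg hy with rfl | h
    · exact absurd hy hgE₀
    · exact h
  have hCE₀ : C ⊆ E₀ := hC'.2 hE₀.1 hE₀C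
  have hCDD : C ⊆ D ∪ D' := fun y hy => (hE₀sub (hCE₀ hy)).1
  have hCunion : C = (C ∩ D) ∪ (C ∩ D') := by
    rw [← inter_union_distrib_left]
    exact (inter_eq_left.2 hCDD).symm
  have hle : C.ncard ≤ (C ∩ D).ncard + (C ∩ D').ncard := by
    calc C.ncard = ((C ∩ D) ∪ (C ∩ D')).ncard := by rw [← hCunion]
    _ ≤ (C ∩ D).ncard + (C ∩ D').ncard := Set.ncard_union_le _ _
  rw [inter_comm C D] at hle
  rw [inter_comm C D'] at hle
  omega
end

section
/- Let M be a minor-minimal matroid that is not 2-laminar (an excluded minor for the class of 2-laminar matroids), and let C1, C2 be circuits of M with |C1 ∩ C2| ≥ 2 such that neither is contained in the closure of the other. Then E(M) = cl(C1) ∪ cl(C2), both cl(C1) and cl(C2) are hyperplanes of M, and |C1| = |C2|. -/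
open Set

namespace Matroid

variable {α : Type*}

/-- Deletion of a set of elements. -/
def delete' (M : Matroid α) (D : Set α) : Matroid α := M.restrict (M.E \ D)

/-- Contraction of a set of elements, defined via duality. -/
def contract' (M : Matroid α) (C : Set α) : Matroid α := (M✶.delete' C)✶

/-! ### Auxiliary lemmas -/

section Aux

variable {M : Matroid α} {B C D I X R : Set α} {a e f : α}

lemma closure_flat' (M : Matroid α) (X : Set α) : M.IsFlat (M.closure X) := by
  have h : {F | M.IsFlat F ∧ X ∩ M.E ⊆ F}.Nonempty := ⟨M.E, M.ground_isFlat, inter_subset_right⟩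
  rw [closure_def, sInter_eq_iInter]
  have := h.to_subtype
  exact IsFlat.iInter fun F ↦ F.2.1

lemma Circuit.dep' (h : M.Circuit C) : M.Dep C := h.1

lemma Circuit.subset_ground' (h : M.Circuit C) : C ⊆ M.E := h.1.subset_ground

lemma Circuit.min (h : M.Circuit C) (hD : M.Dep D) (hDC : D ⊆ C) : C ⊆ D := h.2 hD hDC

lemma Circuit.nonempty' (h : M.Circuit C) : C.Nonempty := by
  rw [nonempty_iff_ne_empty]
  rintro rfl
  exact h.dep'.1 M.empty_indep

lemma Circuit.diff_singleton_indep' (h : M.Circuit C) (ha : a ∈ C) : M.Indep (C \ {a}) := by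
  by_contra hi
  have hd : M.Dep (C \ {a}) := ⟨hi, diff_subset.trans h.subset_ground'⟩
  exact (h.min hd diff_subset ha).2 rfl

lemma Circuit.subset_closure_diff_singleton (h : M.Circuit C) (a : α) :
    C ⊆ M.closure (C \ {a}) := by
  intro x hx
  by_cases hxa : x = a
  · subst hxa
    rw [(h.diff_singleton_indep' hx).mem_closure_iff]
    left
    rw [insert_diff_singleton, insert_eq_of_mem hx]
    exact h.dep'
  · exact M.subset_closure _ (diff_subset.trans h.subset_ground') ⟨hx, hxa⟩

lemma Circuit.closure_diff_singleton (h : M.Circuit C) (a : α) :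
    M.closure (C \ {a}) = M.closure C :=
  subset_antisymm (M.closure_subset_closure diff_subset)
    (M.closure_subset_closure_of_subset_closure (h.subset_closure_diff_singleton a))

lemma Circuit.basis_diff_singleton (h : M.Circuit C) (ha : a ∈ C) :
    M.IsBasis (C \ {a}) (M.closure C) := by
  rw [← h.closure_diff_singleton a]
  exact (h.diff_singleton_indep' ha).isBasis_closure

lemma rk_eq_ncard_of_basis [M.Finite] (hIX : M.IsBasis I X) : M.rk X = I.ncard := by
  have hXE : X ⊆ M.E := hIX.subset_ground
  apply IsGreatest.csSup_eq
  constructor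
  · exact ⟨I, hIX.subset, hIX.indep, rfl⟩
  · rintro n ⟨J, hJX, hJ, rfl⟩
    obtain ⟨J', hJ', hJJ'⟩ := hJ.subset_isBasis_of_subset hJX hXE
    have h1 : J'.ncard = I.ncard := hJ'.restrict_isBase.ncard_eq_ncard_of_isBase hIX.restrict_isBase
    have hfin : J'.Finite := M.set_finite J' hJ'.indep.subset_ground
    calc J.ncard ≤ J'.ncard := ncard_le_ncard hJJ' hfin
    _ = I.ncard := h1

lemma rk_ground_eq [M.Finite] (hB : M.IsBase B) : M.rk M.E = B.ncard :=
  rk_eq_ncard_of_basis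
    (hB.indep.isBasis_of_subset_of_subset_closure hB.subset_ground (by rw [hB.closure_eq]))

lemma restrict_closure_eq'' (M : Matroid α) (hXR : X ⊆ R) (hR : R ⊆ M.E) :
    (M ↾ R).closure X = M.closure X ∩ R := by
  obtain ⟨I, hI⟩ := (M ↾ R).exists_isBasis X (by simpa)
  have hIM : M.IsBasis I X := hI.of_isRestriction (M.restrict_isRestriction R hR)
  have hIR : I ⊆ R := by simpa using hI.indep.subset_ground
  rw [← hI.closure_eq_closure, ← hIM.closure_eq_closure]
  ext e
  rw [hI.indep.mem_closure_iff, mem_inter_iff, hIM.indep.mem_closure_iff,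
    restrict_dep_iff, dep_iff]
  constructor
  · rintro (⟨hni, hsubR⟩ | heI)
    · exact ⟨Or.inl ⟨hni, hsubR.trans hR⟩, hsubR (mem_insert _ _)⟩
    · exact ⟨Or.inr heI, hIR heI⟩
  · rintro ⟨(⟨hni, -⟩ | heI), heR⟩
    · exact Or.inl ⟨hni, insert_subset heR hIR⟩
    · exact Or.inr heI

lemma circuit_restrict_iff (hCR : C ⊆ R) (hR : R ⊆ M.E) :
    (M ↾ R).Circuit C ↔ M.Circuit C := by
  constructor
  · rintro ⟨hd, hmin⟩
    rw [restrict_dep_iff] at hd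
    refine ⟨⟨hd.1, hCR.trans hR⟩, fun D hD hDC ↦ ?_⟩
    exact hmin (restrict_dep_iff.mpr ⟨hD.1, hDC.trans hCR⟩) hDC
  · rintro ⟨hd, hmin⟩
    refine ⟨restrict_dep_iff.mpr ⟨hd.1, hCR⟩, fun D hD hDC ↦ ?_⟩
    rw [restrict_dep_iff] at hD
    exact hmin ⟨hD.1, hDC.trans (hCR.trans hR)⟩ hDC

lemma contract_empty' (M : Matroid α) : M.contract' ∅ = M := by
  rw [contract', delete', diff_empty, restrict_ground_eq_self, dual_dual]

lemma delete_empty' (M : Matroid α) : M.delete' ∅ = M := by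
  rw [delete', diff_empty, restrict_ground_eq_self]

lemma contract_ground' (M : Matroid α) (C : Set α) : (M.contract' C).E = M.E \ C := rfl

lemma contract_elem_indep_iff (hf : M.Indep {f}) :
    (M.contract' {f}).Indep I ↔ I ⊆ M.E \ {f} ∧ M.Indep (insert f I) := by
  have hfE : f ∈ M.E := hf.subset_ground rfl
  have hsp : M✶.Spanning (M.E \ {f}) := by
    obtain ⟨B₀, hB₀, hfB₀⟩ := hf.exists_isBase_superset
    exact hB₀.compl_isBase_dual.spanning_of_superset
      (diff_subset_diff_right (by simpa using hfB₀)) diff_subset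
  have hbase : ∀ B : Set α, (M✶ ↾ (M✶.E \ {f})).IsBase B ↔ (M✶.IsBase B ∧ B ⊆ M.E \ {f}) := by
    intro B
    rw [show M✶.E = M.E from rfl,
      isBase_restrict_iff (M := M✶) (X := M.E \ {f}) diff_subset]
    constructor
    · intro h
      exact ⟨h.indep.isBase_of_ground_subset_closure
        (by rw [h.closure_eq_closure, hsp.closure_eq]), h.subset⟩
    · rintro ⟨hB, hBs⟩
      exact hB.indep.isBasis_of_subset_of_subset_closure hBs
        (by rw [hB.closure_eq]; exact diff_subset)
  rw [show M.contract' {f} = (M✶ ↾ (M✶.E \ {f}))✶ from rfl, dual_indep_iff_exists']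
  simp only [restrict_ground_eq]
  constructor
  · rintro ⟨hIE, B, hB, hdj⟩
    rw [hbase] at hB
    obtain ⟨hB, hBf⟩ := hB
    have hBc : M.IsBase (M.E \ B) := hB.compl_isBase_of_dual
    refine ⟨hIE, hBc.indep.subset ?_⟩
    refine insert_subset ⟨hfE, fun hfB ↦ (hBf hfB).2 rfl⟩ fun x hx ↦
      ⟨(hIE hx).1, fun hxB ↦ disjoint_left.mp hdj hx hxB⟩
  · rintro ⟨hIE, hind⟩
    obtain ⟨B', hB', hsub⟩ := hind.exists_isBase_superset
    refine ⟨hIE, M.E \ B', ?_, ?_⟩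
    · rw [hbase]
      refine ⟨hB'.compl_isBase_dual, diff_subset_diff_right
        (singleton_subset_iff.mpr (hsub (mem_insert _ _)))⟩
    · exact disjoint_left.mpr fun x hx hxc ↦ hxc.2 (hsub (mem_insert_of_mem _ hx))

lemma contract_closure_subset (hf : M.Indep {f}) (hX : X ⊆ M.E \ {f}) :
    (M.contract' {f}).closure X ⊆ M.closure (insert f X) := by
  have hfE : f ∈ M.E := hf.subset_ground rfl
  set N := M.contract' {f} with hN
  obtain ⟨I, hI⟩ := N.exists_isBasis X (by rw [hN, contract_ground']; exact hX)
  have hIi : N.Indep I := hI.indep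
  have hImem := (contract_elem_indep_iff hf).mp hIi
  have hfI : M.Indep (insert f I) := hImem.2
  rw [← hI.closure_eq_closure]
  intro e he
  have heE : e ∈ M.E \ {f} := by
    rw [← contract_ground' M {f}]
    exact N.closure_subset_ground I he
  rw [hIi.mem_closure_iff] at he
  have hle : M.closure (insert f I) ⊆ M.closure (insert f X) :=
    M.closure_subset_closure (insert_subset_insert hI.subset)
  rcases he with hdep | heI
  · refine hle ?_
    rw [hfI.mem_closure_iff]
    left
    have hni : ¬ N.Indep (insert e I) := hdep.1
    rw [contract_elem_indep_iff hf] at hni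
    push_neg at hni
    have hsub : insert e I ⊆ M.E \ {f} := insert_subset heE hImem.1
    have hd : M.Dep (insert f (insert e I)) :=
      ⟨hni hsub, insert_subset hfE (hsub.trans diff_subset)⟩
    rwa [insert_comm] at hd
  · exact hle (M.subset_closure _ (insert_subset hfE (hImem.1.trans diff_subset))
      (mem_insert_of_mem _ heI))

lemma circuit_contract_of_not_mem_closure (hf : M.Indep {f}) (hC : M.Circuit C)
    (hfC : f ∉ M.closure C) : (M.contract' {f}).Circuit C := by
  have hCE : C ⊆ M.E := hC.subset_ground'
  have hfE : f ∈ M.E := hf.subset_ground rfl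
  have hfnC : f ∉ C := fun h ↦ hfC (M.subset_closure C hCE h)
  have hCE' : C ⊆ M.E \ {f} := subset_diff_singleton hCE hfnC
  constructor
  · refine ⟨fun hi ↦ ?_, by rw [contract_ground']; exact hCE'⟩
    rw [contract_elem_indep_iff hf] at hi
    exact hC.dep'.1 (hi.2.subset (subset_insert _ _))
  · intro D hD hDC
    have hDE : D ⊆ M.E \ {f} := hD.2
    have hfD : f ∉ M.closure D := fun h ↦ hfC (M.closure_subset_closure hDC h)
    have hMD : M.Dep D := by
      refine ⟨fun hi ↦ ?_, hDE.trans diff_subset⟩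
      have hins : M.Indep (insert f D) := by
        rw [hi.insert_indep_iff_of_notMem (fun h ↦ (hDE h).2 rfl)]
        exact ⟨hfE, hfD⟩
      exact hD.1 ((contract_elem_indep_iff hf).mpr ⟨hDE, hins⟩)
    exact hC.min hMD hDC

lemma circuit_contract_diff (hf : M.Indep {f}) (hC : M.Circuit C) (hfC : f ∈ C) :
    (M.contract' {f}).Circuit (C \ {f}) := by
  have hfE : f ∈ M.E := hf.subset_ground rfl
  have hCE := hC.subset_ground'
  have hgr : C \ {f} ⊆ (M.contract' {f}).E := by
    rw [contract_ground']; exact diff_subset_diff_left hCE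
  constructor
  · refine ⟨fun hi ↦ ?_, hgr⟩
    rw [contract_elem_indep_iff hf, insert_diff_singleton, insert_eq_of_mem hfC] at hi
    exact hC.dep'.1 hi.2
  · intro D hD hDC
    have hDE : D ⊆ M.E \ {f} := hD.2
    have hdep : M.Dep (insert f D) := by
      refine ⟨fun hi ↦ hD.1 ((contract_elem_indep_iff hf).mpr ⟨hDE, hi⟩),
        insert_subset hfE (hDE.trans diff_subset)⟩
    have hsub := hC.min hdep (insert_subset hfC (hDC.trans diff_subset))
    intro x hx
    rcases mem_insert_iff.mp (hsub hx.1) with h | h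
    · exact absurd h hx.2
    · exact h

lemma key_step (M : Matroid α) [M.Finite]
    (hmin : ∀ C D : Set α, C ⊆ M.E → D ⊆ M.E → Disjoint C D → (C ∪ D).Nonempty →
      ((M.contract' C).delete' D).KLaminar 2)
    {C₁ C₂ : Set α} (hC₁ : M.Circuit C₁) (hC₂ : M.Circuit C₂)
    (hint : 2 ≤ (C₁ ∩ C₂).ncard)
    (h1 : ¬ C₁ ⊆ M.closure C₂) {f : α} (hf : f ∈ C₂ \ M.closure C₁) :
    C₂ ⊆ M.closure (insert f C₁) := by
  have hfC₂ : f ∈ C₂ := hf.1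
  have hfnc1 : f ∉ M.closure C₁ := hf.2
  have hfE : f ∈ M.E := hC₂.subset_ground' hfC₂
  have hfi : M.Indep {f} := by
    by_contra hdep
    have hd : M.Dep {f} := ⟨hdep, singleton_subset_iff.mpr hfE⟩
    have hsub := hC₂.min hd (singleton_subset_iff.mpr hfC₂)
    have hle : (C₁ ∩ C₂).ncard ≤ 1 := by
      calc (C₁ ∩ C₂).ncard ≤ ({f} : Set α).ncard :=
            ncard_le_ncard (inter_subset_right.trans hsub) (finite_singleton f)
      _ = 1 := ncard_singleton f
    omega
  have hlam : (M.contract' {f}).KLaminar 2 := by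
    have h := hmin {f} ∅ (singleton_subset_iff.mpr hfE) (empty_subset _)
      (disjoint_empty _) (by simp)
    rwa [delete_empty'] at h
  have hcc1 : (M.contract' {f}).Circuit C₁ := circuit_contract_of_not_mem_closure hfi hC₁ hfnc1
  have hcc2 : (M.contract' {f}).Circuit (C₂ \ {f}) := circuit_contract_diff hfi hC₂ hfC₂
  have hfnC₁ : f ∉ C₁ := fun h ↦ hfnc1 (M.subset_closure _ hC₁.subset_ground' h)
  have hinter : C₁ ∩ (C₂ \ {f}) = C₁ ∩ C₂ := by
    ext x
    constructor
    · rintro ⟨hx1, hx2, -⟩; exact ⟨hx1, hx2⟩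
    · rintro ⟨hx1, hx2⟩
      exact ⟨hx1, hx2, fun he ↦ hfnC₁ (mem_singleton_iff.mp he ▸ hx1)⟩
  have hintN : 2 ≤ (C₁ ∩ (C₂ \ {f})).ncard := by rwa [hinter]
  rcases hlam C₁ (C₂ \ {f}) hcc1 hcc2 hintN with hsub | hsub
  · exfalso
    apply h1
    have h' := hsub.trans
      (contract_closure_subset hfi (diff_subset_diff_left hC₂.subset_ground'))
    rwa [insert_diff_singleton, insert_eq_of_mem hfC₂] at h'
  · have h2' := hsub.trans
      (contract_closure_subset hfi (subset_diff_singleton hC₁.subset_ground' hfnC₁))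
    intro x hx
    by_cases hxf : x = f
    · subst hxf
      exact M.mem_closure_of_mem (mem_insert _ _) (insert_subset hfE hC₁.subset_ground')
    · exact h2' ⟨hx, hxf⟩

end Aux

end Matroid

/-- A hyperplane: a flat of rank `r(M) - 1`. -/
def Matroid.Hyper {α : Type*} (M : Matroid α) (F : Set α) : Prop :=
  M.IsFlat F ∧ M.rk F + 1 = M.rk M.E

/-- in an excluded minor for the class of `2`-laminar matroids, if `C₁`
and `C₂` are circuits meeting in at least two elements with neither contained in the
closure of the other, then `E(M) = cl C₁ ∪ cl C₂`, both closures are hyperplanes, and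
`|C₁| = |C₂|`. -/
theorem excluded_minor_two_laminar {α : Type*} (M : Matroid α) [M.Finite]
    (hnot : ¬ M.KLaminar 2)
    (hmin : ∀ C D : Set α, C ⊆ M.E → D ⊆ M.E → Disjoint C D → (C ∪ D).Nonempty →
      ((M.contract' C).delete' D).KLaminar 2)
    {C₁ C₂ : Set α} (hC₁ : M.Circuit C₁) (hC₂ : M.Circuit C₂)
    (hint : 2 ≤ (C₁ ∩ C₂).ncard)
    (h1 : ¬ C₁ ⊆ M.closure C₂) (h2 : ¬ C₂ ⊆ M.closure C₁) :
    M.E = M.closure C₁ ∪ M.closure C₂ ∧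
      M.Hyper (M.closure C₁) ∧ M.Hyper (M.closure C₂) ∧ C₁.ncard = C₂.ncard := by
  clear hnot
  open Matroid in
  -- Step 1 : the ground set is the union of the two closures.
  have hground : M.E = M.closure C₁ ∪ M.closure C₂ := by
    apply subset_antisymm _
      (union_subset (M.closure_subset_ground C₁) (M.closure_subset_ground C₂))
    intro e heE
    by_contra heU
    rw [mem_union] at heU
    push_neg at heU
    obtain ⟨he1, he2⟩ := heU
    have hlam := hmin ∅ {e} (empty_subset _) (singleton_subset_iff.mpr heE)
      (empty_disjoint _) (by simp)
    rw [Matroid.contract_empty'] at hlam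
    have hRE : M.E \ {e} ⊆ M.E := diff_subset
    have hC₁R : C₁ ⊆ M.E \ {e} := subset_diff_singleton hC₁.subset_ground'
      (fun h ↦ he1 (M.subset_closure _ hC₁.subset_ground' h))
    have hC₂R : C₂ ⊆ M.E \ {e} := subset_diff_singleton hC₂.subset_ground'
      (fun h ↦ he2 (M.subset_closure _ hC₂.subset_ground' h))
    have hc1 : (M.delete' {e}).Circuit C₁ := (Matroid.circuit_restrict_iff hC₁R hRE).mpr hC₁
    have hc2 : (M.delete' {e}).Circuit C₂ := (Matroid.circuit_restrict_iff hC₂R hRE).mpr hC₂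
    rcases hlam C₁ C₂ hc1 hc2 hint with hs | hs
    · rw [show M.delete' {e} = M ↾ (M.E \ {e}) from rfl,
        Matroid.restrict_closure_eq'' M hC₂R hRE] at hs
      exact h1 (hs.trans inter_subset_left)
    · rw [show M.delete' {e} = M ↾ (M.E \ {e}) from rfl,
        Matroid.restrict_closure_eq'' M hC₁R hRE] at hs
      exact h2 (hs.trans inter_subset_left)
  -- Step 2 : spanning sets obtained from the key contraction step.
  obtain ⟨f, hfC₂, hfn⟩ := not_subset.mp h2
  obtain ⟨g, hgC₁, hgn⟩ := not_subset.mp h1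
  have hfE : f ∈ M.E := hC₂.subset_ground' hfC₂
  have hgE : g ∈ M.E := hC₁.subset_ground' hgC₁
  have hint' : 2 ≤ (C₂ ∩ C₁).ncard := by rwa [inter_comm]
  have hkey1 : C₂ ⊆ M.closure (insert f C₁) :=
    Matroid.key_step M hmin hC₁ hC₂ hint h1 ⟨hfC₂, hfn⟩
  have hkey2 : C₁ ⊆ M.closure (insert g C₂) :=
    Matroid.key_step M hmin hC₂ hC₁ hint' h2 ⟨hgC₁, hgn⟩
  have hspan1 : M.closure (insert f C₁) = M.E := by
    apply subset_antisymm (M.closure_subset_ground _)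
    rw [hground]
    exact union_subset (M.closure_subset_closure (subset_insert f C₁))
      (M.closure_subset_closure_of_subset_closure hkey1)
  have hspan2 : M.closure (insert g C₂) = M.E := by
    apply subset_antisymm (M.closure_subset_ground _)
    rw [hground]
    exact union_subset (M.closure_subset_closure_of_subset_closure hkey2)
      (M.closure_subset_closure (subset_insert g C₂))
  -- Step 3 : rank computations.
  obtain ⟨a, ha⟩ := hC₁.nonempty'
  obtain ⟨b, hb⟩ := hC₂.nonempty'
  have hB1 : M.IsBasis (C₁ \ {a}) (M.closure C₁) := hC₁.basis_diff_singleton ha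
  have hB2 : M.IsBasis (C₂ \ {b}) (M.closure C₂) := hC₂.basis_diff_singleton hb
  have hrk1 : M.rk (M.closure C₁) = (C₁ \ {a}).ncard := Matroid.rk_eq_ncard_of_basis hB1
  have hrk2 : M.rk (M.closure C₂) = (C₂ \ {b}).ncard := Matroid.rk_eq_ncard_of_basis hB2
  have hfnC₁ : f ∉ C₁ := fun h ↦ hfn (M.subset_closure _ hC₁.subset_ground' h)
  have hgnC₂ : g ∉ C₂ := fun h ↦ hgn (M.subset_closure _ hC₂.subset_ground' h)
  have hi1 : M.Indep (insert f (C₁ \ {a})) := by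
    have hi := hC₁.diff_singleton_indep' ha
    rw [hi.insert_indep_iff_of_notMem (fun h ↦ hfnC₁ h.1)]
    exact ⟨hfE, fun hmem ↦ hfn (by rwa [hC₁.closure_diff_singleton a] at hmem)⟩
  have hi2 : M.Indep (insert g (C₂ \ {b})) := by
    have hi := hC₂.diff_singleton_indep' hb
    rw [hi.insert_indep_iff_of_notMem (fun h ↦ hgnC₂ h.1)]
    exact ⟨hgE, fun hmem ↦ hgn (by rwa [hC₂.closure_diff_singleton b] at hmem)⟩
  have hBase1 : M.IsBase (insert f (C₁ \ {a})) := by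
    apply hi1.isBase_of_ground_subset_closure
    rw [← closure_insert_closure_eq_closure_insert, hC₁.closure_diff_singleton a,
      closure_insert_closure_eq_closure_insert, hspan1]
  have hBase2 : M.IsBase (insert g (C₂ \ {b})) := by
    apply hi2.isBase_of_ground_subset_closure
    rw [← closure_insert_closure_eq_closure_insert, hC₂.closure_diff_singleton b,
      closure_insert_closure_eq_closure_insert, hspan2]
  have hfin1 : (C₁ \ {a}).Finite := M.set_finite _ (diff_subset.trans hC₁.subset_ground')
  have hfin2 : (C₂ \ {b}).Finite := M.set_finite _ (diff_subset.trans hC₂.subset_ground')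
  have hrkE1 : M.rk M.E = (C₁ \ {a}).ncard + 1 := by
    rw [Matroid.rk_ground_eq hBase1,
      ncard_insert_of_notMem (fun h ↦ hfnC₁ h.1) hfin1]
  have hrkE2 : M.rk M.E = (C₂ \ {b}).ncard + 1 := by
    rw [Matroid.rk_ground_eq hBase2,
      ncard_insert_of_notMem (fun h ↦ hgnC₂ h.1) hfin2]
  have hcard1 : (C₁ \ {a}).ncard + 1 = C₁.ncard :=
    ncard_diff_singleton_add_one ha (M.set_finite _ hC₁.subset_ground')
  have hcard2 : (C₂ \ {b}).ncard + 1 = C₂.ncard :=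
    ncard_diff_singleton_add_one hb (M.set_finite _ hC₂.subset_ground')
  refine ⟨hground, ⟨Matroid.closure_flat' M C₁, by rw [hrk1, hrkE1]⟩,
    ⟨Matroid.closure_flat' M C₂, by rw [hrk2, hrkE2]⟩, by omega⟩
end
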